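/- For all x, x̃ ∈ ℝ^d: (1/n)∑_{i=1}^n ‖∇f_i(x) − ∇f(x) − ∇f_i(x̃) + ∇f(x̃)‖² ≤ 4L·[F(x) − F(x*) + F(x̃) − F(x*)]. -/

import Mathlib

open scoped BigOperators

open Filter Set Topology

variable {E : Type*} [NormedAddCommGroup E] [InnerProductSpace ℝ E] [CompleteSpace E]

local notation "⟪" x ", " y "⟫" => @inner ℝ _ _ x y

lemma lineDeriv' {f : E → ℝ} {G : E} {y u : E} {t : ℝ}
    (hg : HasGradientAt f G (y + t • u)) :
    HasDerivAt (fun s : ℝ => f (y + s • u)) ⟪G, u⟫ t := by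
  have hc : HasDerivAt (fun s : ℝ => y + s • u) u t := by
    simpa using ((hasDerivAt_id t).smul_const u).const_add y
  have := hg.hasFDerivAt.comp_hasDerivAt t hc
  simp only [InnerProductSpace.toDual_apply_apply] at this
  exact this

/-- Gradient inequality for convex functions. -/
lemma grad_ineq {f : E → ℝ} {G : E} {y z : E}
    (hconv : ConvexOn ℝ Set.univ f) (hg : HasGradientAt f G y) :
    f y + ⟪G, z - y⟫ ≤ f z := by
  set u := z - y with hu
  have hφ : HasDerivAt (fun s : ℝ => f (y + s • u)) ⟪G, u⟫ 0 := by
    apply lineDeriv'; simpa using hg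
  have hslope : Tendsto (slope (fun s : ℝ => f (y + s • u)) 0) (𝓝[>] 0) (𝓝 ⟪G, u⟫) :=
    (hasDerivAt_iff_tendsto_slope.1 hφ).mono_left
      (nhdsWithin_mono 0 (fun t ht => ne_of_gt ht))
  have hbd : ∀ t ∈ Ioc (0:ℝ) 1, slope (fun s : ℝ => f (y + s • u)) 0 t ≤ f z - f y := by
    intro t ht
    have hcv := hconv.2 (mem_univ y) (mem_univ z) (by linarith [ht.1, ht.2] : (0:ℝ) ≤ 1 - t)
      (le_of_lt ht.1) (by ring)
    have hpt : y + t • u = (1 - t) • y + t • z := by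
      simp [hu, smul_sub, sub_smul]; abel
    rw [slope_def_field]
    simp only [zero_smul, add_zero]
    rw [hpt, sub_zero, div_le_iff₀ ht.1]
    simp only [smul_eq_mul] at hcv
    nlinarith [hcv]
  have hev : ∀ᶠ t in 𝓝[>] (0:ℝ), slope (fun s : ℝ => f (y + s • u)) 0 t ≤ f z - f y := by
    filter_upwards [Ioc_mem_nhdsGT_of_mem (by norm_num : (0:ℝ) ∈ Ico (0:ℝ) 1)] with t ht
    exact hbd t ht
  have := le_of_tendsto hslope hev
  linarith

/-- Descent lemma for functions with Lipschitz gradient. -/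
lemma descent_lemma {f : E → ℝ} {G : E → E} {L : ℝ} (hL : 0 < L)
    (hg : ∀ x, HasGradientAt f (G x) x)
    (hlip : ∀ a b, ‖G a - G b‖ ≤ L * ‖a - b‖) (x y : E) :
    f x ≤ f y + ⟪G y, x - y⟫ + L / 2 * ‖x - y‖ ^ 2 := by
  set u := x - y with hu
  set φ' : ℝ → ℝ := fun t => ⟪G (y + t • u), u⟫ with hφ'
  have hderiv : ∀ t ∈ Icc (0:ℝ) 1, HasDerivAt (fun s : ℝ => f (y + s • u)) (φ' t) t :=
    fun t _ => lineDeriv' (hg _)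
  have hGlip : LipschitzWith (Real.toNNReal L) G := by
    refine LipschitzWith.of_dist_le_mul fun a b => ?_
    rw [dist_eq_norm]
    exact (hlip a b).trans (by rw [Real.coe_toNNReal _ hL.le, dist_eq_norm])
  have hcont : Continuous φ' := by
    apply Continuous.inner
    · exact hGlip.continuous.comp (by continuity)
    · exact continuous_const
  have hint : IntervalIntegrable φ' MeasureTheory.volume 0 1 :=
    hcont.intervalIntegrable 0 1
  have hftc : (∫ t in (0:ℝ)..1, φ' t) = f (y + (1:ℝ) • u) - f (y + (0:ℝ) • u) := by
    exact intervalIntegral.integral_eq_sub_of_hasDerivAt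
      (fun t ht => hderiv t (by simpa [Set.uIcc_of_le (zero_le_one)] using ht)) hint
  have hbound : ∀ t ∈ Icc (0:ℝ) 1, φ' t ≤ φ' 0 + L * t * ‖u‖ ^ 2 := by
    intro t ht
    have h1 : φ' t - φ' 0 = ⟪G (y + t • u) - G y, u⟫ := by
      simp [hφ', inner_sub_left]
    have h2 : ⟪G (y + t • u) - G y, u⟫ ≤ ‖G (y + t • u) - G y‖ * ‖u‖ :=
      real_inner_le_norm _ _
    have h3 : ‖G (y + t • u) - G y‖ ≤ L * (t * ‖u‖) := by
      have := hlip (y + t • u) y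
      simpa [norm_smul, abs_of_nonneg ht.1] using this
    nlinarith [norm_nonneg u, mul_le_mul_of_nonneg_right h3 (norm_nonneg u)]
  have hmono : (∫ t in (0:ℝ)..1, φ' t) ≤ ∫ t in (0:ℝ)..1, (φ' 0 + L * t * ‖u‖ ^ 2) := by
    apply intervalIntegral.integral_mono_on zero_le_one hint
    · exact (Continuous.intervalIntegrable (by continuity) 0 1)
    · exact hbound
  have hval : (∫ t in (0:ℝ)..1, (φ' 0 + L * t * ‖u‖ ^ 2)) = φ' 0 + L / 2 * ‖u‖ ^ 2 := by
    rw [intervalIntegral.integral_add (intervalIntegrable_const)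
      (Continuous.intervalIntegrable (by continuity) 0 1)]
    simp only [intervalIntegral.integral_const, smul_eq_mul]
    have : (∫ t in (0:ℝ)..1, L * t * ‖u‖ ^ 2) = L * ‖u‖^2 * ∫ t in (0:ℝ)..1, t := by
      rw [← intervalIntegral.integral_const_mul]
      congr 1; funext t; ring
    rw [this, integral_id]
    ring
  have hphi0 : φ' 0 = ⟪G y, u⟫ := by simp [hφ']
  have h1u : y + (1:ℝ) • u = x := by simp [hu]
  have h0u : y + (0:ℝ) • u = y := by simp
  rw [h1u, h0u] at hftc
  linarith [hmono.trans_eq hval, hftc, hphi0.symm ▸ (le_refl (φ' 0))]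

/-- Key bound: `‖∇f x − ∇f y‖² ≤ 2L (f x − f y − ⟪∇f y, x−y⟫)` for convex `L`-smooth `f`. -/
lemma grad_sq_le_bregman {f : E → ℝ} {G : E → E} {L : ℝ} (hL : 0 < L)
    (hconv : ConvexOn ℝ Set.univ f)
    (hg : ∀ x, HasGradientAt f (G x) x)
    (hlip : ∀ a b, ‖G a - G b‖ ≤ L * ‖a - b‖) (x y : E) :
    ‖G x - G y‖ ^ 2 ≤ 2 * L * (f x - f y - ⟪G y, x - y⟫) := by
  set w := G x - G y with hw
  set z := x - L⁻¹ • w with hz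
  have hA : f y + ⟪G y, z - y⟫ ≤ f z := grad_ineq hconv (hg y)
  have hB : f z ≤ f x + ⟪G x, z - x⟫ + L / 2 * ‖z - x‖ ^ 2 := descent_lemma hL hg hlip z x
  have hzx : z - x = -(L⁻¹ • w) := by rw [hz]; abel
  have h1 : ⟪G x, z - x⟫ = -(L⁻¹ * ⟪G x, w⟫) := by
    rw [hzx, inner_neg_right, real_inner_smul_right]
  have h2 : ‖z - x‖ ^ 2 = L⁻¹ ^ 2 * ‖w‖ ^ 2 := by
    rw [hzx, norm_neg, norm_smul]
    simp [abs_of_nonneg (inv_nonneg.2 hL.le), mul_pow]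
  have h3 : ⟪G y, z - y⟫ = ⟪G y, x - y⟫ - L⁻¹ * ⟪G y, w⟫ := by
    have : z - y = (x - y) - L⁻¹ • w := by rw [hz]; abel
    rw [this, inner_sub_right, real_inner_smul_right]
  have h4 : ⟪G x, w⟫ - ⟪G y, w⟫ = ‖w‖ ^ 2 := by
    rw [← inner_sub_left, ← hw, real_inner_self_eq_norm_sq]
  have hLinv : L⁻¹ * L = 1 := inv_mul_cancel₀ hL.ne'
  have p1 : L / 2 * ‖z - x‖ ^ 2 = L⁻¹ / 2 * ‖w‖ ^ 2 := by
    rw [h2]; field_simp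
  have p2 : L⁻¹ * ⟪G x, w⟫ - L⁻¹ * ⟪G y, w⟫ = L⁻¹ * ‖w‖ ^ 2 := by
    rw [← mul_sub, h4]
  have key : L⁻¹ / 2 * ‖w‖ ^ 2 ≤ f x - f y - ⟪G y, x - y⟫ := by linarith
  have hmul := mul_le_mul_of_nonneg_left key (by positivity : (0:ℝ) ≤ 2 * L)
  have : 2 * L * (L⁻¹ / 2 * ‖w‖ ^ 2) = ‖w‖ ^ 2 := by field_simp
  linarith

lemma variance_le {n : ℕ} (a : Fin n → E) :
    ∑ i, ‖a i - (n:ℝ)⁻¹ • ∑ j, a j‖ ^ 2 ≤ ∑ i, ‖a i‖ ^ 2 := by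
  rcases Nat.eq_zero_or_pos n with hn | hn
  · subst hn; simp
  set A := (n:ℝ)⁻¹ • ∑ j, a j with hA
  have hnne : (n:ℝ) ≠ 0 := Nat.cast_ne_zero.2 hn.ne'
  have hsum : (∑ j, a j) = (n:ℝ) • A := by
    rw [hA, smul_smul, mul_inv_cancel₀ hnne, one_smul]
  have hexp : ∀ i : Fin n, ‖a i - A‖ ^ 2 = ‖a i‖ ^ 2 - 2 * ⟪a i, A⟫ + ‖A‖ ^ 2 :=
    fun i => norm_sub_sq_real _ _
  calc ∑ i, ‖a i - A‖ ^ 2 = ∑ i, (‖a i‖ ^ 2 - 2 * ⟪a i, A⟫ + ‖A‖ ^ 2) :=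
        Finset.sum_congr rfl fun i _ => hexp i
    _ = ∑ i, ‖a i‖ ^ 2 - 2 * ⟪∑ i, a i, A⟫ + (n:ℝ) * ‖A‖ ^ 2 := by
        rw [Finset.sum_add_distrib, Finset.sum_sub_distrib, sum_inner]
        simp [Finset.mul_sum, Finset.sum_const]
    _ = ∑ i, ‖a i‖ ^ 2 - (n:ℝ) * ‖A‖ ^ 2 := by
        rw [hsum, real_inner_smul_left, real_inner_self_eq_norm_sq]; ring
    _ ≤ ∑ i, ‖a i‖ ^ 2 := by
        have : 0 ≤ (n:ℝ) * ‖A‖ ^ 2 := by positivity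
        linarith

lemma sq_sub_le (p q : E) : ‖p - q‖ ^ 2 ≤ 2 * ‖p‖ ^ 2 + 2 * ‖q‖ ^ 2 := by
  have h := pow_le_pow_left₀ (norm_nonneg _) (norm_sub_le p q) 2
  nlinarith [sq_nonneg (‖p‖ - ‖q‖)]

set_option maxHeartbeats 1000000 in
/-- Lemma 1: variance bound for the SVRG gradient estimator.
For all `x, x̃`:
`(1/n) ∑ᵢ ‖∇fᵢ(x) - ∇f(x) - ∇fᵢ(x̃) + ∇f(x̃)‖² ≤ 4L [F(x) - F(x*) + F(x̃) - F(x*)]`. -/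
theorem svrg_variance_bound {d n : ℕ} (hn : 0 < n) (L : ℝ) (hL : 0 < L)
    (f : Fin n → EuclideanSpace ℝ (Fin d) → ℝ)
    (g : Fin n → EuclideanSpace ℝ (Fin d) → EuclideanSpace ℝ (Fin d))
    (hconv : ∀ i, ConvexOn ℝ Set.univ (f i))
    (hgrad : ∀ i x, HasGradientAt (f i) (g i x) x)
    (hLip : ∀ i x y, ‖g i x - g i y‖ ≤ L * ‖x - y‖)
    (r : EuclideanSpace ℝ (Fin d) → ℝ) (hr : ConvexOn ℝ Set.univ r)
    (F : EuclideanSpace ℝ (Fin d) → ℝ)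
    (hF : ∀ x, F x = (n : ℝ)⁻¹ * ∑ i, f i x + r x)
    (gf : EuclideanSpace ℝ (Fin d) → EuclideanSpace ℝ (Fin d))
    (hgf : ∀ x, gf x = (n : ℝ)⁻¹ • ∑ i, g i x)
    (xstar : EuclideanSpace ℝ (Fin d)) (hstar : ∀ x, F xstar ≤ F x)
    (x xt : EuclideanSpace ℝ (Fin d)) :
    (n : ℝ)⁻¹ * ∑ i, ‖g i x - gf x - g i xt + gf xt‖ ^ 2 ≤
      4 * L * (F x - F xstar + (F xt - F xstar)) := by
  have hnne : (n:ℝ) ≠ 0 := Nat.cast_ne_zero.2 hn.ne'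
  have hnpos : (0:ℝ) < (n:ℝ)⁻¹ := by positivity
  set fb : EuclideanSpace ℝ (Fin d) → ℝ := fun z => (n:ℝ)⁻¹ * ∑ i, f i z with hfb
  -- convexity of the average
  have hfbconv : ConvexOn ℝ Set.univ fb := by
    refine ⟨convex_univ, fun p _ q _ c e hc he hce => ?_⟩
    simp only [hfb, smul_eq_mul]
    have hle : ∀ i : Fin n, f i (c • p + e • q) ≤ c * f i p + e * f i q := fun i => by
      simpa [smul_eq_mul] using (hconv i).2 (Set.mem_univ p) (Set.mem_univ q) hc he hce
    calc (n:ℝ)⁻¹ * ∑ i, f i (c • p + e • q)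
        ≤ (n:ℝ)⁻¹ * ∑ i, (c * f i p + e * f i q) :=
          mul_le_mul_of_nonneg_left (Finset.sum_le_sum fun i _ => hle i) hnpos.le
      _ = c * ((n:ℝ)⁻¹ * ∑ i, f i p) + e * ((n:ℝ)⁻¹ * ∑ i, f i q) := by
          rw [Finset.sum_add_distrib, ← Finset.mul_sum, ← Finset.mul_sum]; ring
  -- gradient of the average
  have hfbgrad : ∀ z, HasGradientAt fb (gf z) z := by
    intro z
    have hsum : HasFDerivAt (fun w => ∑ i, f i w)
        (∑ i, InnerProductSpace.toDual ℝ _ (g i z)) z :=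
      HasFDerivAt.fun_sum fun i _ => (hgrad i z).hasFDerivAt
    have h2 := hsum.const_mul ((n:ℝ)⁻¹)
    have h3 : InnerProductSpace.toDual ℝ _ (gf z)
        = (n:ℝ)⁻¹ • ∑ i, InnerProductSpace.toDual ℝ _ (g i z) := by
      rw [hgf z, map_smul, map_sum]
    rw [hasGradientAt_iff_hasFDerivAt, h3]
    exact h2
  -- Lipschitz continuity of the average gradient
  have hgfLip : ∀ a b, ‖gf a - gf b‖ ≤ L * ‖a - b‖ := by
    intro a b
    rw [hgf a, hgf b, ← smul_sub, ← Finset.sum_sub_distrib, norm_smul]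
    have h1 : ‖(n:ℝ)⁻¹‖ = (n:ℝ)⁻¹ := by
      rw [Real.norm_eq_abs, abs_of_pos hnpos]
    rw [h1]
    calc (n:ℝ)⁻¹ * ‖∑ i, (g i a - g i b)‖
        ≤ (n:ℝ)⁻¹ * ∑ i, ‖g i a - g i b‖ :=
          mul_le_mul_of_nonneg_left (norm_sum_le _ _) hnpos.le
      _ ≤ (n:ℝ)⁻¹ * ∑ _i : Fin n, L * ‖a - b‖ :=
          mul_le_mul_of_nonneg_left (Finset.sum_le_sum fun i _ => hLip i a b) hnpos.le
      _ = L * ‖a - b‖ := by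
          rw [Finset.sum_const, Finset.card_univ, Fintype.card_fin, nsmul_eq_mul]
          field_simp
  -- first-order optimality
  have hopt : ∀ z, r xstar - r z ≤ ⟪gf xstar, z - xstar⟫ := by
    intro z
    set u := z - xstar with hu
    set M := L * ‖u‖ ^ 2 with hM
    have hM0 : 0 ≤ M := by positivity
    have key : ∀ t : ℝ, 0 < t → t ≤ 1 →
        0 ≤ ⟪gf xstar, u⟫ + (r z - r xstar) + t * M := by
      intro t ht0 ht1
      set p := xstar + t • u with hp
      have h1 : F xstar ≤ F p := hstar p
      have h2 : r p ≤ (1 - t) * r xstar + t * r z := by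
        have hpt : p = (1 - t) • xstar + t • z := by
          simp only [hp, hu, smul_sub, sub_smul, one_smul]; abel
        rw [hpt]
        simpa [smul_eq_mul] using
          hr.2 (Set.mem_univ xstar) (Set.mem_univ z) (by linarith) ht0.le (by ring)
      have h3 : fb p + ⟪gf p, xstar - p⟫ ≤ fb xstar := grad_ineq hfbconv (hfbgrad p)
      have h4 : xstar - p = -(t • u) := by rw [hp]; abel
      have h5 : ⟪gf p, xstar - p⟫ = -(t * ⟪gf p, u⟫) := by
        rw [h4, inner_neg_right, real_inner_smul_right]
      have h6 : ⟪gf p, u⟫ ≤ ⟪gf xstar, u⟫ + t * M := by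
        have hi : ⟪gf p - gf xstar, u⟫ ≤ ‖gf p - gf xstar‖ * ‖u‖ := real_inner_le_norm _ _
        have hl : ‖gf p - gf xstar‖ ≤ L * (t * ‖u‖) := by
          have := hgfLip p xstar
          simpa [hp, norm_smul, abs_of_pos ht0] using this
        have : ⟪gf p - gf xstar, u⟫ ≤ t * M := by
          calc ⟪gf p - gf xstar, u⟫ ≤ ‖gf p - gf xstar‖ * ‖u‖ := hi
            _ ≤ L * (t * ‖u‖) * ‖u‖ :=
              mul_le_mul_of_nonneg_right hl (norm_nonneg u)
            _ = t * M := by rw [hM]; ring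
        rw [inner_sub_left] at this
        linarith
      have hFp : F p = fb p + r p := hF p
      have hFs : F xstar = fb xstar + r xstar := hF xstar
      have ht : 0 ≤ t * (⟪gf p, u⟫ + (r z - r xstar)) := by nlinarith
      have hX : 0 ≤ ⟪gf p, u⟫ + (r z - r xstar) :=
        le_of_mul_le_mul_left (by linarith) ht0
      nlinarith
    by_contra hcon
    push_neg at hcon
    set c := ⟪gf xstar, u⟫ + (r z - r xstar) with hc
    have hcneg : c < 0 := by rw [hc]; linarith
    set t := min 1 (-c / (2 * M + 1)) with htdef
    have h2M : (0:ℝ) < 2 * M + 1 := by linarith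
    have ht0 : 0 < t := lt_min one_pos (div_pos (by linarith) h2M)
    have ht1 : t ≤ 1 := min_le_left _ _
    have hkey := key t ht0 ht1
    have ht2 : t ≤ -c / (2 * M + 1) := min_le_right _ _
    have htm : t * M ≤ (-c / (2 * M + 1)) * M := mul_le_mul_of_nonneg_right ht2 hM0
    have hfrac : (-c / (2 * M + 1)) * M ≤ -c / 2 := by
      rw [div_mul_eq_mul_div, div_le_div_iff₀ h2M two_pos]
      nlinarith
    linarith
  -- per-point key bound
  have hkey : ∀ z, (n:ℝ)⁻¹ * ∑ i, ‖g i z - g i xstar‖ ^ 2 ≤ 2 * L * (F z - F xstar) := by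
    intro z
    have hper : ∀ i : Fin n, ‖g i z - g i xstar‖ ^ 2
        ≤ 2 * L * (f i z - f i xstar - ⟪g i xstar, z - xstar⟫) := fun i =>
      grad_sq_le_bregman hL (hconv i) (hgrad i) (hLip i) z xstar
    have hsum : ∑ i, ‖g i z - g i xstar‖ ^ 2
        ≤ 2 * L * (∑ i, f i z - ∑ i, f i xstar - ⟪∑ i, g i xstar, z - xstar⟫) := by
      calc ∑ i, ‖g i z - g i xstar‖ ^ 2
          ≤ ∑ i, 2 * L * (f i z - f i xstar - ⟪g i xstar, z - xstar⟫) :=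
            Finset.sum_le_sum fun i _ => hper i
        _ = 2 * L * (∑ i, f i z - ∑ i, f i xstar - ⟪∑ i, g i xstar, z - xstar⟫) := by
            rw [← Finset.mul_sum, sum_inner, Finset.sum_sub_distrib, Finset.sum_sub_distrib]
    have hmul := mul_le_mul_of_nonneg_left hsum hnpos.le
    have hinner : ⟪gf xstar, z - xstar⟫ = (n:ℝ)⁻¹ * ⟪∑ i, g i xstar, z - xstar⟫ := by
      rw [hgf xstar, real_inner_smul_left]
    have hrw : (n:ℝ)⁻¹ * (2 * L * (∑ i, f i z - ∑ i, f i xstar - ⟪∑ i, g i xstar, z - xstar⟫))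
        = 2 * L * (fb z - fb xstar - ⟪gf xstar, z - xstar⟫) := by
      rw [hinner]; simp only [hfb]; ring
    have hopt' := hopt z
    have hFz : F z = fb z + r z := hF z
    have hFs : F xstar = fb xstar + r xstar := hF xstar
    calc (n:ℝ)⁻¹ * ∑ i, ‖g i z - g i xstar‖ ^ 2
        ≤ 2 * L * (fb z - fb xstar - ⟪gf xstar, z - xstar⟫) := hrw ▸ hmul
      _ ≤ 2 * L * (F z - F xstar) := by nlinarith
  -- assemble
  set a : Fin n → EuclideanSpace ℝ (Fin d) := fun i => g i x - g i xstar with ha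
  set b : Fin n → EuclideanSpace ℝ (Fin d) := fun i => g i xt - g i xstar with hb
  have hA : gf x - gf xstar = (n:ℝ)⁻¹ • ∑ j, a j := by
    rw [hgf x, hgf xstar, ← smul_sub, ← Finset.sum_sub_distrib]
  have hB : gf xt - gf xstar = (n:ℝ)⁻¹ • ∑ j, b j := by
    rw [hgf xt, hgf xstar, ← smul_sub, ← Finset.sum_sub_distrib]
  have hterm : ∀ i : Fin n, g i x - gf x - g i xt + gf xt
      = (a i - (n:ℝ)⁻¹ • ∑ j, a j) - (b i - (n:ℝ)⁻¹ • ∑ j, b j) := by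
    intro i
    rw [← hA, ← hB, ha, hb]
    simp only
    abel
  calc (n:ℝ)⁻¹ * ∑ i, ‖g i x - gf x - g i xt + gf xt‖ ^ 2
      ≤ (n:ℝ)⁻¹ * ∑ i, (2 * ‖a i - (n:ℝ)⁻¹ • ∑ j, a j‖ ^ 2
          + 2 * ‖b i - (n:ℝ)⁻¹ • ∑ j, b j‖ ^ 2) := by
        refine mul_le_mul_of_nonneg_left (Finset.sum_le_sum fun i _ => ?_) hnpos.le
        rw [hterm i]; exact sq_sub_le _ _
    _ = 2 * ((n:ℝ)⁻¹ * ∑ i, ‖a i - (n:ℝ)⁻¹ • ∑ j, a j‖ ^ 2)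
        + 2 * ((n:ℝ)⁻¹ * ∑ i, ‖b i - (n:ℝ)⁻¹ • ∑ j, b j‖ ^ 2) := by
        rw [Finset.sum_add_distrib, ← Finset.mul_sum, ← Finset.mul_sum]; ring
    _ ≤ 2 * ((n:ℝ)⁻¹ * ∑ i, ‖a i‖ ^ 2) + 2 * ((n:ℝ)⁻¹ * ∑ i, ‖b i‖ ^ 2) := by
        have h1 := mul_le_mul_of_nonneg_left (variance_le a) hnpos.le
        have h2 := mul_le_mul_of_nonneg_left (variance_le b) hnpos.le
        linarith
    _ ≤ 2 * (2 * L * (F x - F xstar)) + 2 * (2 * L * (F xt - F xstar)) := by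
        have h1 := hkey x
        have h2 := hkey xt
        simp only [ha, hb]
        linarith
    _ = 4 * L * (F x - F xstar + (F xt - F xstar)) := by ring
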